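/- Assume the Main Assumption. Then the sub-level sets of ℒ in 𝒞₀ are bounded: for every c₁ ∈ ℝ there exists c₂ > 0 such that every W ∈ 𝒞₀ with ℒ(W) ≤ c₁ satisfies ‖W_sh − W‖_{L²(ℝ)} ≤ c₂. -/

import Mathlib

open MeasureTheory Filter Topology

/-- The averaging operator `(𝒜U)(φ) = ∫_{φ-1/2}^{φ+1/2} U(s) ds`. -/
noncomputable def avg (U : ℝ → ℝ) (φ : ℝ) : ℝ := ∫ s in (φ - 1/2)..(φ + 1/2), U s

/-- The shock profile connecting `-1` to `1`. -/
noncomputable def Wsh : ℝ → ℝ := fun φ => if 0 ≤ φ then 1 else -1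

/-- The set `𝒞` of monotone heteroclinic profiles. -/
def inC (W : ℝ → ℝ) : Prop :=
  Monotone W ∧ MemLp (fun φ => Wsh φ - W φ) 2 (volume : Measure ℝ) ∧
  Tendsto W atBot (𝓝 (-1 : ℝ)) ∧ Tendsto W atTop (𝓝 (1 : ℝ))

/-- The set `𝒞₀` of pinned profiles. -/
def inC0 (W : ℝ → ℝ) : Prop :=
  inC W ∧ (∀ φ : ℝ, 0 ≤ φ → W φ ∈ Set.Icc (0 : ℝ) 1) ∧
  (∀ φ : ℝ, φ < 0 → W φ ∈ Set.Icc (-1 : ℝ) 0)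

/-- The action functional `ℒ`. -/
noncomputable def action (Φ W : ℝ → ℝ) : ℝ :=
  ∫ φ, ((W φ ^ 2 / 2 - Φ (avg W φ)) - (Wsh φ ^ 2 / 2 - Φ (avg Wsh φ)))


section basic
variable {W : ℝ → ℝ} (hmeas : Measurable W) (hbd : ∀ φ, W φ ∈ Set.Icc (-1:ℝ) 1)

lemma Wsh_bd (φ : ℝ) : Wsh φ ∈ Set.Icc (-1:ℝ) 1 := by
  unfold Wsh; split <;> norm_num

include hmeas hbd in
lemma W_ii (a b : ℝ) : IntervalIntegrable W volume a b := by
  apply IntervalIntegrable.mono_fun (intervalIntegrable_const (c := (1:ℝ)))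
  · exact hmeas.aestronglyMeasurable.restrict
  · refine Filter.Eventually.of_forall (fun x => ?_)
    simpa using abs_le.mpr ⟨(hbd x).1, (hbd x).2⟩

include hmeas hbd in
lemma continuous_avg : Continuous (avg W) := by
  have h := intervalIntegral.continuous_primitive (f := W) (μ := volume)
    (fun a b => W_ii hmeas hbd a b) 0
  have : avg W = fun φ => (∫ x in (0:ℝ)..(φ + 1/2), W x) - ∫ x in (0:ℝ)..(φ - 1/2), W x := by
    funext φ
    have := intervalIntegral.integral_add_adjacent_intervals
      (W_ii hmeas hbd 0 (φ - 1/2)) (W_ii hmeas hbd (φ - 1/2) (φ + 1/2))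
    rw [avg]; linarith
  rw [this]
  exact ((h.comp (by continuity)).sub (h.comp (by continuity)))

include hmeas hbd in
lemma avg_mem_of (φ a b : ℝ) (h : ∀ s ∈ Set.Icc (φ - 1/2) (φ + 1/2), W s ∈ Set.Icc a b) :
    avg W φ ∈ Set.Icc a b := by
  have hle : φ - 1/2 ≤ φ + 1/2 := by linarith
  constructor
  · have : a * 1 = ∫ _ in (φ - 1/2)..(φ + 1/2), a := by
      rw [intervalIntegral.integral_const, smul_eq_mul]; ring
    rw [show a = a * 1 by ring, this]
    apply intervalIntegral.integral_mono_on hle (intervalIntegrable_const) (W_ii hmeas hbd _ _)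
    exact fun x hx => (h x hx).1
  · have : b * 1 = ∫ _ in (φ - 1/2)..(φ + 1/2), b := by
      rw [intervalIntegral.integral_const, smul_eq_mul]; ring
    rw [show b = b * 1 by ring, this]
    apply intervalIntegral.integral_mono_on hle (W_ii hmeas hbd _ _) (intervalIntegrable_const)
    exact fun x hx => (h x hx).2

include hmeas hbd in
lemma avg_mem (φ : ℝ) : avg W φ ∈ Set.Icc (-1:ℝ) 1 :=
  avg_mem_of hmeas hbd φ _ _ (fun s _ => hbd s)

end basic

section mono
variable {W : ℝ → ℝ} (hmono : Monotone W) (hbd : ∀ φ, W φ ∈ Set.Icc (-1:ℝ) 1)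

include hmono hbd in
lemma avg_mem_between (φ : ℝ) : avg W φ ∈ Set.Icc (W (φ - 1/2)) (W (φ + 1/2)) :=
  avg_mem_of hmono.measurable hbd φ _ _
    (fun s hs => ⟨hmono hs.1, hmono hs.2⟩)

end mono

lemma avg_Wsh_right {φ : ℝ} (h : 1/2 ≤ φ) : avg Wsh φ = 1 := by
  rw [avg]
  rw [intervalIntegral.integral_congr (g := fun _ => (1:ℝ))]
  · rw [intervalIntegral.integral_const, smul_eq_mul]; ring
  · intro x hx
    rw [Set.uIcc_of_le (by linarith)] at hx
    unfold Wsh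
    rw [if_pos (by linarith [hx.1])]

lemma avg_Wsh_left {φ : ℝ} (h : φ < -(1/2)) : avg Wsh φ = -1 := by
  rw [avg]
  rw [intervalIntegral.integral_congr (g := fun _ => (-1:ℝ))]
  · rw [intervalIntegral.integral_const, smul_eq_mul]; ring
  · intro x hx
    rw [Set.uIcc_of_le (by linarith)] at hx
    unfold Wsh
    rw [if_neg (by push_neg; linarith [hx.2])]

lemma Wsh_measurable : Measurable Wsh := by
  unfold Wsh
  exact Measurable.ite measurableSet_Ici measurable_const measurable_const

lemma avg_Wsh_mem (φ : ℝ) : avg Wsh φ ∈ Set.Icc (-1:ℝ) 1 :=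
  avg_mem Wsh_measurable Wsh_bd φ


noncomputable def gfun (Φ : ℝ → ℝ) (w : ℝ) : ℝ := Φ (-1) - Φ w + w^2/2 - 1/2

section gprops
variable {Φ : ℝ → ℝ} (hΦ : ContDiff ℝ 2 Φ)

include hΦ in
lemma diff1 : Differentiable ℝ Φ := hΦ.differentiable (by norm_num)

include hΦ in
lemma contd1 : ContDiff ℝ 1 (deriv Φ) := by
  have h : ContDiff ℝ ((1:WithTop ℕ∞)+1) Φ := by
    convert hΦ using 2
    exact one_add_one_eq_two
  exact (contDiff_succ_iff_deriv.mp h).2.2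

include hΦ in
lemma diff2 : Differentiable ℝ (deriv Φ) :=
  (contDiff_one_iff_deriv.mp (contd1 hΦ)).1

include hΦ in
lemma cont_dd : Continuous (deriv (deriv Φ)) :=
  (contDiff_one_iff_deriv.mp (contd1 hΦ)).2

include hΦ in
lemma cont_d : Continuous (deriv Φ) := (diff2 hΦ).continuous

include hΦ in
lemma ftc_d {a b : ℝ} : ∫ s in a..b, deriv (deriv Φ) s = deriv Φ b - deriv Φ a :=
  intervalIntegral.integral_eq_sub_of_hasDerivAt (fun x _ => ((diff2 hΦ) x).hasDerivAt)
    ((cont_dd hΦ).intervalIntegrable a b)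

include hΦ in
lemma gfun_hasDeriv (w : ℝ) : HasDerivAt (gfun Φ) (w - deriv Φ w) w := by
  have h1 : HasDerivAt Φ (deriv Φ w) w := ((diff1 hΦ) w).hasDerivAt
  have h2 : HasDerivAt (fun w : ℝ => w^2/2) w w := by
    have := ((hasDerivAt_pow 2 w).div_const 2)
    simpa using this
  have h3 := (((hasDerivAt_const w (Φ (-1))).sub h1).add h2).sub_const (1/2)
  have e1 : gfun Φ = fun w => Φ (-1) - Φ w + w^2/2 - 1/2 := rfl
  have h4 : w - deriv Φ w = 0 - deriv Φ w + w := by ring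
  rw [e1, h4]
  exact h3

include hΦ in
lemma ftc_g {a b : ℝ} : ∫ s in a..b, (s - deriv Φ s) = gfun Φ b - gfun Φ a :=
  intervalIntegral.integral_eq_sub_of_hasDerivAt (fun x _ => gfun_hasDeriv hΦ x)
    ((continuous_id.sub (cont_d hΦ)).intervalIntegrable a b)

variable (hN1 : deriv Φ (-1) = -1) (hN2 : deriv Φ 1 = 1)
  (hC : ∀ w ∈ Set.Icc (-1 : ℝ) 1, 0 ≤ deriv (deriv Φ) w)
  (hE : Φ (-1) = Φ 1)

include hΦ hN2 hC in
lemma derivP_le_one {s : ℝ} (hs : s ∈ Set.Icc (-1:ℝ) 1) : deriv Φ s ≤ 1 := by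
  have h : (0:ℝ) ≤ ∫ t in s..1, deriv (deriv Φ) t := by
    apply intervalIntegral.integral_nonneg hs.2
    intro u hu; exact hC u ⟨le_trans hs.1 hu.1, hu.2⟩
  rw [ftc_d hΦ, hN2] at h; linarith

include hΦ hN1 hC in
lemma neg_one_le_derivP {s : ℝ} (hs : s ∈ Set.Icc (-1:ℝ) 1) : -1 ≤ deriv Φ s := by
  have h : (0:ℝ) ≤ ∫ t in (-1:ℝ)..s, deriv (deriv Φ) t := by
    apply intervalIntegral.integral_nonneg hs.1
    intro u hu; exact hC u ⟨hu.1, le_trans hu.2 hs.2⟩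
  rw [ftc_d hΦ, hN1] at h; linarith

include hE in
lemma gfun_one : gfun Φ 1 = 0 := by unfold gfun; rw [hE]; ring

lemma gfun_negone : gfun Φ (-1) = 0 := by unfold gfun; ring

-- upper bound on [0,1]
include hΦ hN2 hC hE in
lemma gfun_ub_right {w : ℝ} (hw : w ∈ Set.Icc (0:ℝ) 1) : gfun Φ w ≤ (1-w)^2/2 := by
  have key : gfun Φ 1 - gfun Φ w = ∫ s in w..1, (s - deriv Φ s) := (ftc_g hΦ).symm
  rw [gfun_one hE] at key
  have hmono : (∫ s in w..1, (s - deriv Φ s)) ≥ ∫ s in w..1, (s - 1 : ℝ) := by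
    apply intervalIntegral.integral_mono_on hw.2
      ((continuous_id.sub continuous_const).intervalIntegrable _ _)
      ((continuous_id.sub (cont_d hΦ)).intervalIntegrable _ _)
    intro x hx
    have := derivP_le_one hΦ hN2 hC (s := x) ⟨by linarith [hw.1, hx.1], hx.2⟩
    show x - 1 ≤ x - deriv Φ x; linarith
  have hcomp : (∫ s in w..1, (s - 1 : ℝ)) = -((1-w)^2/2) := by
    open intervalIntegral in
    rw [integral_sub intervalIntegrable_id intervalIntegrable_const, integral_id]
    simp [intervalIntegral.integral_const]; ring
  nlinarith [key, hmono, hcomp]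

include hΦ hN1 hC in
lemma gfun_ub_left {w : ℝ} (hw : w ∈ Set.Icc (-1:ℝ) 0) : gfun Φ w ≤ (1+w)^2/2 := by
  have key : gfun Φ w - gfun Φ (-1) = ∫ s in (-1:ℝ)..w, (s - deriv Φ s) := (ftc_g hΦ).symm
  rw [gfun_negone] at key
  have hmono : (∫ s in (-1:ℝ)..w, (s - deriv Φ s)) ≤ ∫ s in (-1:ℝ)..w, (s + 1 : ℝ) := by
    apply intervalIntegral.integral_mono_on hw.1
      ((continuous_id.sub (cont_d hΦ)).intervalIntegrable _ _)
      ((continuous_id.add continuous_const).intervalIntegrable _ _)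
    intro x hx
    have := neg_one_le_derivP hΦ hN1 hC (s := x) ⟨hx.1, by linarith [hw.2, hx.2]⟩
    show x - deriv Φ x ≤ x + 1; linarith
  have hcomp : (∫ s in (-1:ℝ)..w, (s + 1 : ℝ)) = (1+w)^2/2 := by
    open intervalIntegral in
    rw [integral_add intervalIntegrable_id intervalIntegrable_const, integral_id]
    simp [intervalIntegral.integral_const]; ring
  linarith

include hΦ hN1 hN2 hC hE in
lemma gfun_le_two {w : ℝ} (hw : w ∈ Set.Icc (-1:ℝ) 1) : gfun Φ w ≤ 2 := by
  rcases le_or_gt 0 w with h | h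
  · have := gfun_ub_right hΦ hN2 hC hE (w := w) ⟨h, hw.2⟩; nlinarith [hw.2]
  · have := gfun_ub_left hΦ hN1 hC (w := w) ⟨hw.1, le_of_lt h⟩; nlinarith [hw.1]

end gprops

open intervalIntegral in
lemma int_one_sub {w : ℝ} : ∫ s in w..1, (1 - s : ℝ) = (1-w)^2/2 := by
  rw [integral_sub intervalIntegrable_const intervalIntegrable_id, integral_id]
  simp
  ring

open intervalIntegral in
lemma int_one_add {w : ℝ} : ∫ s in (-1:ℝ)..w, (1 + s : ℝ) = (1+w)^2/2 := by
  rw [integral_add intervalIntegrable_const intervalIntegrable_id, integral_id]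
  simp
  ring

section alpha
variable {Φ : ℝ → ℝ} (hΦ : ContDiff ℝ 2 Φ)
  (hN1 : deriv Φ (-1) = -1) (hN2 : deriv Φ 1 = 1)
  (hE : Φ (-1) = Φ 1)

include hΦ hN2 hE in
lemma gfun_lb_near_one {δ θ : ℝ} (hδ : 0 < δ) (hθ1 : θ < 1)
    (hΦ'' : ∀ s ∈ Set.Icc (1-δ) 1, deriv (deriv Φ) s ≤ θ)
    {w : ℝ} (hw : w ∈ Set.Icc (1-δ) 1) : (1-θ)/2*(1-w)^2 ≤ gfun Φ w := by
  have step1 : ∀ s ∈ Set.Icc w 1, s - deriv Φ s ≤ -((1-θ)*(1-s)) := by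
    intro s hs
    have h1 : deriv Φ 1 - deriv Φ s = ∫ t in s..1, deriv (deriv Φ) t := (ftc_d hΦ).symm
    have h2 : (∫ t in s..1, deriv (deriv Φ) t) ≤ ∫ _t in s..1, θ := by
      apply intervalIntegral.integral_mono_on hs.2 ((cont_dd hΦ).intervalIntegrable _ _)
        intervalIntegrable_const
      intro x hx
      exact hΦ'' x ⟨le_trans hw.1 (le_trans hs.1 hx.1), hx.2⟩
    rw [intervalIntegral.integral_const, smul_eq_mul] at h2
    rw [hN2] at h1
    nlinarith [hs.2]
  have key : gfun Φ w = -(∫ s in w..1, (s - deriv Φ s)) := by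
    rw [ftc_g hΦ, gfun_one hE]; ring
  have hmono : (∫ s in w..1, (s - deriv Φ s)) ≤ ∫ s in w..1, -((1-θ)*(1-s)) := by
    apply intervalIntegral.integral_mono_on hw.2
      ((continuous_id.sub (cont_d hΦ)).intervalIntegrable _ _)
      (((continuous_const.mul (continuous_const.sub continuous_id)).neg).intervalIntegrable _ _)
    exact step1
  have hcomp : (∫ s in w..1, -((1-θ)*(1-s))) = -((1-θ)*((1-w)^2/2)) := by
    rw [intervalIntegral.integral_neg, intervalIntegral.integral_const_mul, int_one_sub]
  rw [key]
  rw [hcomp] at hmono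
  nlinarith

include hΦ hN1 in
lemma gfun_lb_near_negone {δ θ : ℝ} (hδ : 0 < δ) (hθ1 : θ < 1)
    (hΦ'' : ∀ s ∈ Set.Icc (-1) (-1+δ), deriv (deriv Φ) s ≤ θ)
    {w : ℝ} (hw : w ∈ Set.Icc (-1) (-1+δ)) : (1-θ)/2*(1+w)^2 ≤ gfun Φ w := by
  have step1 : ∀ s ∈ Set.Icc (-1:ℝ) w, (1-θ)*(1+s) ≤ s - deriv Φ s := by
    intro s hs
    have h1 : deriv Φ s - deriv Φ (-1) = ∫ t in (-1:ℝ)..s, deriv (deriv Φ) t := (ftc_d hΦ).symm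
    have h2 : (∫ t in (-1:ℝ)..s, deriv (deriv Φ) t) ≤ ∫ _t in (-1:ℝ)..s, θ := by
      apply intervalIntegral.integral_mono_on hs.1 ((cont_dd hΦ).intervalIntegrable _ _)
        intervalIntegrable_const
      intro x hx
      exact hΦ'' x ⟨hx.1, le_trans hx.2 (le_trans hs.2 hw.2)⟩
    rw [intervalIntegral.integral_const, smul_eq_mul] at h2
    rw [hN1] at h1
    nlinarith [hs.1]
  have key : gfun Φ w = ∫ s in (-1:ℝ)..w, (s - deriv Φ s) := by
    rw [ftc_g hΦ, gfun_negone]; ring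
  have hmono : (∫ s in (-1:ℝ)..w, ((1-θ)*(1+s))) ≤ ∫ s in (-1:ℝ)..w, (s - deriv Φ s) := by
    apply intervalIntegral.integral_mono_on hw.1
      ((continuous_const.mul (continuous_const.add continuous_id)).intervalIntegrable _ _)
      ((continuous_id.sub (cont_d hΦ)).intervalIntegrable _ _)
    exact step1
  have hcomp : (∫ s in (-1:ℝ)..w, ((1-θ)*(1+s))) = (1-θ)*((1+w)^2/2) := by
    rw [intervalIntegral.integral_const_mul, int_one_add]
  rw [key]
  rw [hcomp] at hmono
  nlinarith

include hΦ hN2 hE in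
lemma alpha_right {δ θ m α : ℝ} (hδ0 : 0 < δ) (hδh : δ ≤ 1/2) (hθ1 : θ < 1)
    (hΦr : ∀ s ∈ Set.Icc (1-δ) 1, deriv (deriv Φ) s ≤ θ)
    (hm : ∀ w ∈ Set.Icc (0:ℝ) (1-δ), m ≤ gfun Φ w)
    (hα1 : α ≤ (1-θ)/2) (hα2 : α ≤ m) (hα0 : 0 < α) :
    ∀ w ∈ Set.Icc (0:ℝ) 1, α*(1-w)^2 ≤ gfun Φ w := by
  intro w hw
  have hsq : (1-w)^2 ≤ 1 := by nlinarith [hw.1, hw.2]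
  have hsq0 : (0:ℝ) ≤ (1-w)^2 := sq_nonneg _
  rcases le_or_gt (1 - δ) w with h | h
  · have h3 := gfun_lb_near_one hΦ hN2 hE hδ0 hθ1 hΦr (w := w) ⟨h, hw.2⟩
    nlinarith
  · have h3 : m ≤ gfun Φ w := hm w ⟨hw.1, le_of_lt h⟩
    nlinarith

include hΦ hN1 in
lemma alpha_left {δ θ m α : ℝ} (hδ0 : 0 < δ) (hδh : δ ≤ 1/2) (hθ1 : θ < 1)
    (hΦl : ∀ s ∈ Set.Icc (-1:ℝ) (-1+δ), deriv (deriv Φ) s ≤ θ)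
    (hm : ∀ w ∈ Set.Icc (-1+δ:ℝ) 0, m ≤ gfun Φ w)
    (hα1 : α ≤ (1-θ)/2) (hα2 : α ≤ m) (hα0 : 0 < α) :
    ∀ w ∈ Set.Icc (-1:ℝ) 0, α*(1+w)^2 ≤ gfun Φ w := by
  intro w hw
  have hsq : (1+w)^2 ≤ 1 := by nlinarith [hw.1, hw.2]
  have hsq0 : (0:ℝ) ≤ (1+w)^2 := sq_nonneg _
  rcases le_or_gt w (-1 + δ) with h | h
  · have h3 := gfun_lb_near_negone hΦ hN1 hδ0 hθ1 hΦl (w := w) ⟨hw.1, h⟩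
    nlinarith
  · have h3 : m ≤ gfun Φ w := hm w ⟨le_of_lt h, hw.2⟩
    nlinarith

include hΦ hN1 hN2 hE in
lemma exists_alpha (hS1 : deriv (deriv Φ) (-1) < 1) (hS2 : deriv (deriv Φ) 1 < 1)
    (hA' : ∀ w ∈ Set.Ioo (-1:ℝ) 1, 0 < gfun Φ w) :
    ∃ α : ℝ, 0 < α ∧ (∀ w ∈ Set.Icc (0:ℝ) 1, α*(1-w)^2 ≤ gfun Φ w) ∧
      (∀ w ∈ Set.Icc (-1:ℝ) 0, α*(1+w)^2 ≤ gfun Φ w) := by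
  have gcont : Continuous (gfun Φ) :=
    ((continuous_const.sub hΦ.continuous).add ((continuous_pow 2).div_const 2)).sub
      continuous_const
  -- right side data
  obtain ⟨δr, θr, hδr0, hδrh, hθr1, hΦr⟩ :
      ∃ δ θ : ℝ, 0 < δ ∧ δ ≤ 1/2 ∧ θ < 1 ∧ ∀ s ∈ Set.Icc (1-δ) 1, deriv (deriv Φ) s ≤ θ := by
    have hθ2 : deriv (deriv Φ) 1 < (1 + deriv (deriv Φ) 1)/2 := by linarith
    have hev : ∀ᶠ s in 𝓝 (1:ℝ), deriv (deriv Φ) s < (1 + deriv (deriv Φ) 1)/2 :=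
      ((cont_dd hΦ).continuousAt (x := 1)).eventually_lt continuousAt_const hθ2
    rw [Metric.eventually_nhds_iff] at hev
    obtain ⟨ε, hε, hball⟩ := hev
    refine ⟨min (ε/2) (1/2), (1 + deriv (deriv Φ) 1)/2, by positivity, min_le_right _ _,
      by linarith, ?_⟩
    intro s hs
    have h1 := min_le_left (ε/2) (1/2)
    refine le_of_lt (hball ?_)
    rw [Real.dist_eq, abs_lt]
    constructor <;> [linarith [hs.1]; linarith [hs.2]]
  obtain ⟨δl, θl, hδl0, hδlh, hθl1, hΦl⟩ :
      ∃ δ θ : ℝ, 0 < δ ∧ δ ≤ 1/2 ∧ θ < 1 ∧ ∀ s ∈ Set.Icc (-1:ℝ) (-1+δ), deriv (deriv Φ) s ≤ θ := by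
    have hθ2 : deriv (deriv Φ) (-1) < (1 + deriv (deriv Φ) (-1))/2 := by linarith
    have hev : ∀ᶠ s in 𝓝 (-1:ℝ), deriv (deriv Φ) s < (1 + deriv (deriv Φ) (-1))/2 :=
      ((cont_dd hΦ).continuousAt (x := -1)).eventually_lt continuousAt_const hθ2
    rw [Metric.eventually_nhds_iff] at hev
    obtain ⟨ε, hε, hball⟩ := hev
    refine ⟨min (ε/2) (1/2), (1 + deriv (deriv Φ) (-1))/2, by positivity, min_le_right _ _,
      by linarith, ?_⟩
    intro s hs
    have h1 := min_le_left (ε/2) (1/2)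
    refine le_of_lt (hball ?_)
    rw [Real.dist_eq, abs_lt]
    constructor <;> [linarith [hs.1]; linarith [hs.2]]
  obtain ⟨zr, hzr, hzrmin⟩ := isCompact_Icc.exists_isMinOn (α := ℝ)
    (Set.nonempty_Icc.mpr (by linarith : (0:ℝ) ≤ 1 - δr)) gcont.continuousOn
  obtain ⟨zl, hzl, hzlmin⟩ := isCompact_Icc.exists_isMinOn (α := ℝ)
    (Set.nonempty_Icc.mpr (by linarith : (-1+δl:ℝ) ≤ 0)) gcont.continuousOn
  have hzrpos : 0 < gfun Φ zr := hA' zr ⟨by linarith [hzr.1], by linarith [hzr.2]⟩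
  have hzlpos : 0 < gfun Φ zl := hA' zl ⟨by linarith [hzl.1], by linarith [hzl.2]⟩
  obtain ⟨α, hα0, h1, h2, h3, h4⟩ :
      ∃ α : ℝ, 0 < α ∧ α ≤ (1-θr)/2 ∧ α ≤ gfun Φ zr ∧ α ≤ (1-θl)/2 ∧ α ≤ gfun Φ zl := by
    refine ⟨min (min ((1-θr)/2) (gfun Φ zr)) (min ((1-θl)/2) (gfun Φ zl)), ?_,
      le_trans (min_le_left _ _) (min_le_left _ _),
      le_trans (min_le_left _ _) (min_le_right _ _),
      le_trans (min_le_right _ _) (min_le_left _ _),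
      le_trans (min_le_right _ _) (min_le_right _ _)⟩
    apply lt_min <;> apply lt_min <;> first | linarith | assumption
  exact ⟨α, hα0,
    alpha_right hΦ hN2 hE hδr0 hδrh hθr1 hΦr (fun w hw => hzrmin hw) h1 h2 hα0,
    alpha_left hΦ hN1 hδl0 hδlh hθl1 hΦl (fun w hw => hzlmin hw) h3 h4 hα0⟩

omit hΦ in
include hE in
lemma gfun_nonneg (hA' : ∀ w ∈ Set.Ioo (-1:ℝ) 1, 0 < gfun Φ w)
    {w : ℝ} (hw : w ∈ Set.Icc (-1:ℝ) 1) : 0 ≤ gfun Φ w := by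
  rcases eq_or_lt_of_le hw.1 with h | h
  · rw [← h, gfun_negone]
  rcases eq_or_lt_of_le hw.2 with h2 | h2
  · rw [h2, gfun_one hE]
  exact le_of_lt (hA' w ⟨h, h2⟩)

end alpha

section main
variable {W : ℝ → ℝ}
  (hmono : Monotone W)
  (hpin0 : ∀ φ : ℝ, 0 ≤ φ → W φ ∈ Set.Icc (0:ℝ) 1)
  (hpin1 : ∀ φ : ℝ, φ < 0 → W φ ∈ Set.Icc (-1:ℝ) 0)

include hpin0 hpin1 in
lemma W_bd : ∀ φ, W φ ∈ Set.Icc (-1:ℝ) 1 := by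
  intro φ
  rcases le_or_gt 0 φ with h | h
  · exact ⟨by linarith [(hpin0 φ h).1], (hpin0 φ h).2⟩
  · exact ⟨(hpin1 φ h).1, by linarith [(hpin1 φ h).2]⟩

include hmono hpin0 hpin1 in
lemma intUB : ∀ c d : ℝ, c ≤ d → (∫ x in c..d, W x) ≤ d - c := by
  intro c d hcd
  have hbd := W_bd hpin0 hpin1
  have h := intervalIntegral.integral_mono_on hcd (W_ii hmono.measurable hbd c d)
    (intervalIntegrable_const (c := (1:ℝ))) (fun x _ => (hbd x).2)
  rwa [intervalIntegral.integral_const, smul_eq_mul, mul_one] at h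

include hmono hpin0 hpin1 in
lemma intLB : ∀ c d : ℝ, c ≤ d → (c - d) ≤ ∫ x in c..d, W x := by
  intro c d hcd
  have hbd := W_bd hpin0 hpin1
  have h := intervalIntegral.integral_mono_on hcd (intervalIntegrable_const (c := (-1:ℝ)))
    (W_ii hmono.measurable hbd c d) (fun x _ => (hbd x).1)
  rw [intervalIntegral.integral_const, smul_eq_mul, mul_neg_one] at h
  linarith

include hmono hpin0 hpin1 in
lemma D_spec : Integrable (fun φ => W (φ + 1/2) - W (φ - 1/2)) volume ∧
    (∫ φ, (W (φ + 1/2) - W (φ - 1/2))) ≤ 2 := by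
  have hbd := W_bd hpin0 hpin1
  have hmeas := hmono.measurable
  set D : ℝ → ℝ := fun φ => W (φ + 1/2) - W (φ - 1/2) with hD
  have hDmeas : Measurable D :=
    (hmeas.comp (measurable_id.add_const _)).sub (hmeas.comp (measurable_id.sub_const _))
  have hDbd : ∀ φ, D φ ∈ Set.Icc (-2:ℝ) 2 := by
    intro φ
    constructor
    · have := (hbd (φ + 1/2)).1; have := (hbd (φ - 1/2)).2; simp only [hD]; linarith
    · have := (hbd (φ + 1/2)).2; have := (hbd (φ - 1/2)).1; simp only [hD]; linarith
  have hDii : ∀ a b : ℝ, IntervalIntegrable D volume a b := by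
    intro a b
    apply IntervalIntegrable.mono_fun (intervalIntegrable_const (c := (2:ℝ)))
    · exact hDmeas.aestronglyMeasurable.restrict
    · refine Filter.Eventually.of_forall (fun x => ?_)
      simpa using abs_le.mpr ⟨(hDbd x).1, (hDbd x).2⟩
  have hDnn : ∀ φ, 0 ≤ D φ := by
    intro φ
    have : W (φ - 1/2) ≤ W (φ + 1/2) := hmono (by linarith)
    simp only [hD]; linarith
  have hval : ∀ a b : ℝ, a ≤ b →
      (∫ x in a..b, D x) = (∫ x in (b - 1/2)..(b + 1/2), W x) - ∫ x in (a - 1/2)..(a + 1/2), W x := by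
    intro a b hab
    have hW1 : IntervalIntegrable (fun x => W (x + 1/2)) volume a b := by
      apply IntervalIntegrable.mono_fun (intervalIntegrable_const (c := (1:ℝ)))
      · exact (hmeas.comp (measurable_id.add_const _)).aestronglyMeasurable.restrict
      · exact Filter.Eventually.of_forall (fun x => by
          simpa using abs_le.mpr ⟨(hbd (x + 1/2)).1, (hbd (x + 1/2)).2⟩)
    have hW2 : IntervalIntegrable (fun x => W (x - 1/2)) volume a b := by
      apply IntervalIntegrable.mono_fun (intervalIntegrable_const (c := (1:ℝ)))
      · exact (hmeas.comp (measurable_id.sub_const _)).aestronglyMeasurable.restrict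
      · exact Filter.Eventually.of_forall (fun x => by
          simpa using abs_le.mpr ⟨(hbd (x - 1/2)).1, (hbd (x - 1/2)).2⟩)
    rw [hD]
    simp only
    rw [intervalIntegral.integral_sub hW1 hW2,
      intervalIntegral.integral_comp_add_right (fun x => W x) (1/2),
      intervalIntegral.integral_comp_sub_right (fun x => W x) (1/2)]
    have h1 := intervalIntegral.integral_add_adjacent_intervals
      (W_ii hmeas hbd (a + 1/2) (b - 1/2)) (W_ii hmeas hbd (b - 1/2) (b + 1/2))
    have h2 := intervalIntegral.integral_add_adjacent_intervals
      (W_ii hmeas hbd (a - 1/2) (a + 1/2)) (W_ii hmeas hbd (a + 1/2) (b - 1/2))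
    linarith
  have hseq : ∀ n : ℕ, (∫ x in (-((n:ℝ)+1))..((n:ℝ)+1), D x) ≤ 2 := by
    intro n
    have hab : (-((n:ℝ)+1)) ≤ ((n:ℝ)+1) := by
      have : (0:ℝ) ≤ (n:ℝ) := Nat.cast_nonneg n
      linarith
    rw [hval _ _ hab]
    have hu := intUB hmono hpin0 hpin1 (((n:ℝ)+1) - 1/2) (((n:ℝ)+1) + 1/2) (by linarith)
    have hl := intLB hmono hpin0 hpin1 ((-((n:ℝ)+1)) - 1/2) ((-((n:ℝ)+1)) + 1/2) (by linarith)
    linarith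
  have hb' : Tendsto (fun n : ℕ => (n:ℝ)+1) atTop atTop :=
    tendsto_atTop_add_const_right _ 1 tendsto_natCast_atTop_atTop
  have ha' : Tendsto (fun n : ℕ => -((n:ℝ)+1)) atTop atBot := tendsto_neg_atBot_iff.mpr hb'
  have hInt : Integrable D volume := by
    apply integrable_of_intervalIntegral_norm_bounded 2 (fun n : ℕ => (hDii _ _).1) ha' hb'
    refine Filter.Eventually.of_forall (fun n => ?_)
    have : (∫ x in (-((n:ℝ)+1))..((n:ℝ)+1), ‖D x‖) = ∫ x in (-((n:ℝ)+1))..((n:ℝ)+1), D x :=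
      intervalIntegral.integral_congr (fun x _ => Real.norm_of_nonneg (hDnn x))
    rw [this]; exact hseq n
  refine ⟨hInt, ?_⟩
  exact le_of_tendsto (intervalIntegral_tendsto_integral hInt ha' hb')
    (Filter.Eventually.of_forall hseq)

end main

lemma Wsh_sq (φ : ℝ) : Wsh φ ^ 2 = 1 := by unfold Wsh; split <;> norm_num

lemma Wsh_of_nonneg {φ : ℝ} (h : 0 ≤ φ) : Wsh φ = 1 := if_pos h

lemma Wsh_of_neg {φ : ℝ} (h : φ < 0) : Wsh φ = -1 := if_neg (not_le.mpr h)

section bigbound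
variable {Φ W : ℝ → ℝ} {α : ℝ}
  (hΦ : ContDiff ℝ 2 Φ)
  (hN1 : deriv Φ (-1) = -1) (hN2 : deriv Φ 1 = 1)
  (hC : ∀ w ∈ Set.Icc (-1 : ℝ) 1, 0 ≤ deriv (deriv Φ) w)
  (hE : Φ (-1) = Φ 1)
  (hA' : ∀ w ∈ Set.Ioo (-1:ℝ) 1, 0 < gfun Φ w)
  (hα0 : 0 < α)
  (hαR : ∀ w ∈ Set.Icc (0:ℝ) 1, α*(1-w)^2 ≤ gfun Φ w)
  (hαL : ∀ w ∈ Set.Icc (-1:ℝ) 0, α*(1+w)^2 ≤ gfun Φ w)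
  (hmono : Monotone W)
  (hpin0 : ∀ φ : ℝ, 0 ≤ φ → W φ ∈ Set.Icc (0:ℝ) 1)
  (hpin1 : ∀ φ : ℝ, φ < 0 → W φ ∈ Set.Icc (-1:ℝ) 0)
  (hL2 : MemLp (fun φ => Wsh φ - W φ) 2 (volume : Measure ℝ))

set_option maxHeartbeats 1000000 in
include hΦ hN1 hN2 hC hE hA' hα0 hαR hαL hmono hpin0 hpin1 hL2 in
lemma action_lower :
    α * (∫ φ, (Wsh φ - W φ)^2) - (16*α + 7) ≤ action Φ W := by
  have hbd := W_bd hpin0 hpin1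
  have hmeas := hmono.measurable
  have gcont : Continuous (gfun Φ) :=
    ((continuous_const.sub hΦ.continuous).add ((continuous_pow 2).div_const 2)).sub
      continuous_const
  set U : ℝ → ℝ := fun φ => Wsh φ - W φ with hU
  set aW : ℝ → ℝ := avg W with haW
  set aS : ℝ → ℝ := avg Wsh with haS
  have haWc : Continuous aW := continuous_avg hmeas hbd
  have haSc : Continuous aS := continuous_avg Wsh_measurable Wsh_bd
  set D : ℝ → ℝ := fun φ => W (φ + 1/2) - W (φ - 1/2) with hD
  obtain ⟨hDint, hDsum⟩ := D_spec hmono hpin0 hpin1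
  have hUmeas : Measurable U := Wsh_measurable.sub hmeas
  have hU2 : Integrable (fun φ => U φ^2) volume := hL2.integrable_sq
  -- T2
  set T2 : ℝ → ℝ := fun φ => (1 - aS φ^2)/2 with hT2
  have hT2c : Continuous T2 := ((continuous_const.sub (haSc.pow 2)).div_const 2)
  have hT2bd : ∀ φ, 0 ≤ T2 φ ∧ T2 φ ≤ 1/2 := by
    intro φ
    have h := avg_Wsh_mem φ
    constructor <;> simp only [hT2] <;> nlinarith [h.1, h.2]
  have hT2z : ∀ x, x ∉ Set.Icc (-1:ℝ) 1 → T2 x = 0 := by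
    intro x hx
    simp only [Set.mem_Icc, not_and_or, not_le] at hx
    rcases hx with h | h
    · simp only [hT2, haS, avg_Wsh_left (by linarith : x < -(1/2))]; norm_num
    · simp only [hT2, haS, avg_Wsh_right (by linarith : 1/2 ≤ x)]; norm_num
  have hT2int : Integrable T2 volume :=
    hT2c.integrable_of_hasCompactSupport (HasCompactSupport.intro isCompact_Icc hT2z)
  have hT2sum : ∫ φ, T2 φ ≤ 1 := by
    rw [← setIntegral_eq_integral_of_forall_compl_eq_zero hT2z]
    have h1 : ∫ φ in Set.Icc (-1:ℝ) 1, T2 φ ≤ ∫ _φ in Set.Icc (-1:ℝ) 1, (1/2 : ℝ) := by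
      apply setIntegral_mono_on hT2int.integrableOn
        (integrableOn_const (C := (1/2:ℝ)) measure_Icc_lt_top.ne) measurableSet_Icc
      intro x _; exact (hT2bd x).2
    rw [setIntegral_const, Real.volume_real_Icc_of_le (by norm_num)] at h1
    rw [show ((1:ℝ) - (-1)) = 2 by norm_num, smul_eq_mul] at h1
    linarith
  -- gS
  set gS : ℝ → ℝ := fun φ => gfun Φ (aS φ) with hgS
  have hgSc : Continuous gS := gcont.comp haSc
  have hgSz : ∀ x, x ∉ Set.Icc (-1:ℝ) 1 → gS x = 0 := by
    intro x hx
    simp only [Set.mem_Icc, not_and_or, not_le] at hx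
    rcases hx with h | h
    · simp only [hgS, haS, avg_Wsh_left (by linarith : x < -(1/2))]; exact gfun_negone
    · simp only [hgS, haS, avg_Wsh_right (by linarith : 1/2 ≤ x)]; exact gfun_one hE
  have hgSint : Integrable gS volume :=
    hgSc.integrable_of_hasCompactSupport (HasCompactSupport.intro isCompact_Icc hgSz)
  have hgSnn : ∀ φ, 0 ≤ gS φ := fun φ => gfun_nonneg hE hA' (avg_Wsh_mem φ)
  have hgSsum : ∫ φ, gS φ ≤ 4 := by
    rw [← setIntegral_eq_integral_of_forall_compl_eq_zero hgSz]
    have h1 : ∫ φ in Set.Icc (-1:ℝ) 1, gS φ ≤ ∫ _φ in Set.Icc (-1:ℝ) 1, (2 : ℝ) := by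
      apply setIntegral_mono_on hgSint.integrableOn
        (integrableOn_const (C := (2:ℝ)) measure_Icc_lt_top.ne) measurableSet_Icc
      intro x _; exact gfun_le_two hΦ hN1 hN2 hC hE (avg_Wsh_mem x)
    rw [setIntegral_const, Real.volume_real_Icc_of_le (by norm_num)] at h1
    rw [show ((1:ℝ) - (-1)) = 2 by norm_num, smul_eq_mul] at h1
    linarith
  -- gW
  set gW : ℝ → ℝ := fun φ => gfun Φ (aW φ) with hgW
  have hgWc : Continuous gW := gcont.comp haWc
  have hgWnn : ∀ φ, 0 ≤ gW φ := fun φ => gfun_nonneg hE hA' (avg_mem hmeas hbd φ)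
  have habsD : ∀ φ, |W φ - aW φ| ≤ D φ := by
    intro φ
    have h1 := (avg_mem_between hmono hbd φ).1
    have h2 := (avg_mem_between hmono hbd φ).2
    have h3 : W (φ - 1/2) ≤ W φ := hmono (by linarith)
    have h4 : W φ ≤ W (φ + 1/2) := hmono (by linarith)
    rw [abs_le]; constructor <;> simp only [hD] <;> [linarith; linarith]
  -- right region bounds
  have haWR : ∀ φ : ℝ, (3/2 : ℝ) ≤ φ → aW φ ∈ Set.Icc (0:ℝ) 1 := by
    intro φ hφ
    exact avg_mem_of hmeas hbd φ 0 1 (fun s hs => hpin0 s (by linarith [hs.1]))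
  have hUR : ∀ ψ : ℝ, (1:ℝ) ≤ ψ → U ψ = 1 - W ψ := by
    intro ψ hψ; simp only [hU, Wsh_of_nonneg (by linarith : (0:ℝ) ≤ ψ)]
  have hubR : ∀ φ : ℝ, (3/2 : ℝ) ≤ φ → gW φ ≤ U (φ - 1/2)^2/2 := by
    intro φ hφ
    have h1 := gfun_ub_right hΦ hN2 hC hE (haWR φ hφ)
    have h2 := (avg_mem_between hmono hbd φ).1
    have h3 := hUR (φ - 1/2) (by linarith)
    have h4 := (haWR φ hφ).2
    have h5 : 0 ≤ 1 - aW φ := by linarith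
    have h6 : 1 - aW φ ≤ U (φ - 1/2) := by rw [h3]; linarith
    have h7 : (1 - aW φ)^2 ≤ U (φ - 1/2)^2 := by nlinarith
    simp only [hgW]; linarith
  have hlbR : ∀ φ ∈ Set.Ici (3/2 : ℝ), α * U (φ + 1/2)^2 ≤ gW φ := by
    intro φ hφ
    rw [Set.mem_Ici] at hφ
    have h1 := hαR _ (haWR φ hφ)
    have h2 := (avg_mem_between hmono hbd φ).2
    have h3 := hUR (φ + 1/2) (by linarith)
    have h4 := (hpin0 (φ + 1/2) (by linarith)).2
    have h5 : 0 ≤ U (φ + 1/2) := by rw [h3]; linarith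
    have h6 : U (φ + 1/2) ≤ 1 - aW φ := by rw [h3]; linarith
    have h7 : U (φ + 1/2)^2 ≤ (1 - aW φ)^2 := by nlinarith
    simp only [hgW]; nlinarith
  -- left region bounds
  have haWL : ∀ φ : ℝ, φ ≤ -(3/2 : ℝ) → aW φ ∈ Set.Icc (-1:ℝ) 0 := by
    intro φ hφ
    exact avg_mem_of hmeas hbd φ (-1) 0 (fun s hs => hpin1 s (by linarith [hs.2]))
  have hUL : ∀ ψ : ℝ, ψ ≤ (-1:ℝ) → U ψ = -1 - W ψ := by
    intro ψ hψ; simp only [hU, Wsh_of_neg (by linarith : ψ < 0)]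
  have hubL : ∀ φ : ℝ, φ ≤ -(3/2 : ℝ) → gW φ ≤ U (φ + 1/2)^2/2 := by
    intro φ hφ
    have h1 := gfun_ub_left hΦ hN1 hC (haWL φ hφ)
    have h2 := (avg_mem_between hmono hbd φ).2
    have h3 := hUL (φ + 1/2) (by linarith)
    have h4 := (haWL φ hφ).1
    have h5 : 0 ≤ 1 + aW φ := by linarith
    have h6 : 1 + aW φ ≤ -(U (φ + 1/2)) := by rw [h3]; linarith
    have h7 : (1 + aW φ)^2 ≤ U (φ + 1/2)^2 := by nlinarith
    simp only [hgW]; linarith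
  have hlbL : ∀ φ ∈ Set.Iic (-(3/2) : ℝ), α * U (φ + (-(1/2)))^2 ≤ gW φ := by
    intro φ hφ
    rw [Set.mem_Iic] at hφ
    have h1 := hαL _ (haWL φ hφ)
    have h2 := (avg_mem_between hmono hbd φ).1
    have h3 : U (φ + (-(1/2))) = -1 - W (φ + (-(1/2))) := hUL _ (by linarith)
    have h4 := (hpin1 (φ + (-(1/2))) (by linarith)).1
    have h40 : W (φ - 1/2) = W (φ + (-(1/2))) := congrArg W (by ring)
    have h5 : 0 ≤ -(U (φ + (-(1/2)))) := by rw [h3]; linarith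
    have h6 : -(U (φ + (-(1/2)))) ≤ 1 + aW φ := by rw [h3]; rw [h40] at h2; linarith
    have h7 : U (φ + (-(1/2)))^2 ≤ (1 + aW φ)^2 := by nlinarith
    simp only [hgW]; nlinarith
  -- integrability of gW
  have hUshift : ∀ c : ℝ, Integrable (fun x => U (x - c)^2) volume := fun c =>
    hU2.comp_sub_right c
  have hUshift' : Integrable (fun x => U (x + 1/2)^2) volume := by
    simpa [sub_neg_eq_add] using hUshift (-(1/2))
  have hUshift'' : Integrable (fun x => U (x + (-(1/2)))^2) volume := by
    simpa [← sub_eq_add_neg] using hUshift (1/2)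
  have i1 : IntegrableOn gW (Set.Ici (3/2 : ℝ)) volume := by
    apply Integrable.mono' (((hUshift (1/2)).div_const 2).integrableOn)
      hgWc.aestronglyMeasurable.restrict
    rw [ae_restrict_iff' measurableSet_Ici]
    refine Filter.Eventually.of_forall (fun φ hφ => ?_)
    rw [Real.norm_of_nonneg (hgWnn φ)]
    exact hubR φ hφ
  have i2 : IntegrableOn gW (Set.Iic (-(3/2) : ℝ)) volume := by
    apply Integrable.mono' ((hUshift'.div_const 2).integrableOn)
      hgWc.aestronglyMeasurable.restrict
    rw [ae_restrict_iff' measurableSet_Iic]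
    refine Filter.Eventually.of_forall (fun φ hφ => ?_)
    rw [Real.norm_of_nonneg (hgWnn φ)]
    exact hubL φ hφ
  have i3 : IntegrableOn gW (Set.Icc (-(3/2):ℝ) (3/2)) volume :=
    hgWc.continuousOn.integrableOn_compact isCompact_Icc
  have hgWint : Integrable gW volume := by
    rw [← integrableOn_univ]
    apply ((i2.union i3).union i1).mono_set
    intro x _
    rcases le_or_gt x (-(3/2)) with h | h
    · exact Or.inl (Or.inl h)
    rcases le_or_gt x (3/2) with h2 | h2
    · exact Or.inl (Or.inr ⟨le_of_lt h, h2⟩)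
    · exact Or.inr (le_of_lt h2)
  -- lower bound for ∫ gW
  have himgR := (measurePreserving_add_right volume (1/2 : ℝ)).setIntegral_image_emb
    (MeasurableEquiv.addRight (1/2 : ℝ)).measurableEmbedding (fun y => U y^2) (Set.Ici (3/2 : ℝ))
  have himgL := (measurePreserving_add_right volume (-(1/2) : ℝ)).setIntegral_image_emb
    (MeasurableEquiv.addRight (-(1/2) : ℝ)).measurableEmbedding (fun y => U y^2)
    (Set.Iic (-(3/2) : ℝ))
  rw [Set.image_add_const_Ici, show ((3:ℝ)/2 + 1/2) = 2 by norm_num] at himgR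
  rw [Set.image_add_const_Iic, show ((-(3/2):ℝ) + -(1/2)) = -2 by norm_num] at himgL
  have hR : α * ∫ ψ in Set.Ici (2:ℝ), U ψ^2 ≤ ∫ φ in Set.Ici (3/2:ℝ), gW φ := by
    have h1 : ∫ φ in Set.Ici (3/2:ℝ), α * U (φ + 1/2)^2 ≤ ∫ φ in Set.Ici (3/2:ℝ), gW φ :=
      setIntegral_mono_on ((hUshift'.const_mul α).integrableOn) i1 measurableSet_Ici hlbR
    rw [integral_const_mul] at h1
    calc α * ∫ ψ in Set.Ici (2:ℝ), U ψ^2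
        = α * ∫ φ in Set.Ici (3/2:ℝ), U (φ + 1/2)^2 := by rw [himgR]
      _ ≤ _ := h1
  have hL : α * ∫ ψ in Set.Iic (-2:ℝ), U ψ^2 ≤ ∫ φ in Set.Iic (-(3/2):ℝ), gW φ := by
    have h1 : ∫ φ in Set.Iic (-(3/2):ℝ), α * U (φ + (-(1/2)))^2
        ≤ ∫ φ in Set.Iic (-(3/2):ℝ), gW φ :=
      setIntegral_mono_on ((hUshift''.const_mul α).integrableOn) i2 measurableSet_Iic hlbL
    rw [integral_const_mul] at h1
    calc α * ∫ ψ in Set.Iic (-2:ℝ), U ψ^2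
        = α * ∫ φ in Set.Iic (-(3/2):ℝ), U (φ + (-(1/2)))^2 := by rw [himgL]
      _ ≤ _ := h1
  have hgWlow : α * (∫ ψ in Set.Iic (-2:ℝ), U ψ^2) + α * (∫ ψ in Set.Ici (2:ℝ), U ψ^2)
      ≤ ∫ φ, gW φ := by
    have hdisj : Disjoint (Set.Iic (-(3/2):ℝ)) (Set.Ici (3/2:ℝ)) := by
      rw [Set.disjoint_left]
      intro x hx hx2
      rw [Set.mem_Iic] at hx; rw [Set.mem_Ici] at hx2; linarith
    have hunion : ∫ φ in (Set.Iic (-(3/2):ℝ) ∪ Set.Ici (3/2:ℝ)), gW φ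
        = (∫ φ in Set.Iic (-(3/2):ℝ), gW φ) + ∫ φ in Set.Ici (3/2:ℝ), gW φ :=
      setIntegral_union hdisj measurableSet_Ici i2 i1
    have hle : ∫ φ in (Set.Iic (-(3/2):ℝ) ∪ Set.Ici (3/2:ℝ)), gW φ ≤ ∫ φ, gW φ :=
      setIntegral_le_integral hgWint (Filter.Eventually.of_forall hgWnn)
    linarith
  -- decomposition of ∫ U²
  have hU4 : ∀ φ, U φ^2 ≤ 4 := by
    intro φ
    have h1 := (hbd φ).1; have h2 := (hbd φ).2
    have h3 := Wsh_bd φ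
    simp only [hU]; nlinarith [h3.1, h3.2]
  have hmid : ∫ ψ in Set.Ioo (-2:ℝ) 2, U ψ^2 ≤ 16 := by
    have h1 : ∫ ψ in Set.Ioo (-2:ℝ) 2, U ψ^2 ≤ ∫ _ψ in Set.Ioo (-2:ℝ) 2, (4:ℝ) := by
      apply setIntegral_mono_on hU2.integrableOn
        (integrableOn_const (C := (4:ℝ)) measure_Ioo_lt_top.ne) measurableSet_Ioo
      intro x _; exact hU4 x
    rw [setIntegral_const, Real.volume_real_Ioo_of_le (by norm_num)] at h1
    rw [show ((2:ℝ) - (-2)) = 4 by norm_num, smul_eq_mul] at h1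
    linarith
  have hdecomp : (∫ φ, U φ^2) = (∫ ψ in Set.Iic (-2:ℝ), U ψ^2)
      + ((∫ ψ in Set.Ioo (-2:ℝ) 2, U ψ^2) + ∫ ψ in Set.Ici (2:ℝ), U ψ^2) := by
    have hsets : Set.Iic (-2:ℝ) ∪ (Set.Ioo (-2:ℝ) 2 ∪ Set.Ici (2:ℝ)) = Set.univ := by
      ext x
      simp only [Set.mem_union, Set.mem_Iic, Set.mem_Ioo, Set.mem_Ici, Set.mem_univ, iff_true]
      rcases le_or_gt x (-2) with h | h
      · exact Or.inl h
      rcases lt_or_ge x 2 with h2 | h2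
      · exact Or.inr (Or.inl ⟨h, h2⟩)
      · exact Or.inr (Or.inr h2)
    have hd2 : Disjoint (Set.Ioo (-2:ℝ) 2) (Set.Ici (2:ℝ)) := by
      rw [Set.disjoint_left]; intro x hx hx2
      rw [Set.mem_Ici] at hx2; exact absurd hx.2 (not_lt.mpr hx2)
    have hd1 : Disjoint (Set.Iic (-2:ℝ)) (Set.Ioo (-2:ℝ) 2 ∪ Set.Ici (2:ℝ)) := by
      rw [Set.disjoint_left]; intro x hx hx2
      rw [Set.mem_Iic] at hx
      rcases hx2 with h | h
      · exact absurd h.1 (not_lt.mpr hx)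
      · rw [Set.mem_Ici] at h; linarith
    have e1 : ∫ ψ in (Set.Ioo (-2:ℝ) 2 ∪ Set.Ici (2:ℝ)), U ψ^2
        = (∫ ψ in Set.Ioo (-2:ℝ) 2, U ψ^2) + ∫ ψ in Set.Ici (2:ℝ), U ψ^2 :=
      setIntegral_union hd2 measurableSet_Ici hU2.integrableOn hU2.integrableOn
    have e2 : ∫ ψ in (Set.Iic (-2:ℝ) ∪ (Set.Ioo (-2:ℝ) 2 ∪ Set.Ici (2:ℝ))), U ψ^2
        = (∫ ψ in Set.Iic (-2:ℝ), U ψ^2)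
          + ∫ ψ in (Set.Ioo (-2:ℝ) 2 ∪ Set.Ici (2:ℝ)), U ψ^2 :=
      setIntegral_union hd1 (measurableSet_Ioo.union measurableSet_Ici)
        hU2.integrableOn hU2.integrableOn
    rw [← e1, ← e2, hsets, setIntegral_univ]
  -- Bf
  set Bf : ℝ → ℝ := fun φ => (W φ^2 - aW φ^2)/2 - T2 φ with hBf
  have hBfabs : ∀ φ, |Bf φ| ≤ D φ + T2 φ := by
    intro φ
    have h1 := habsD φ
    have h2 : |W φ + aW φ| ≤ 2 := by
      have h3 := (hbd φ).1; have h4 := (hbd φ).2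
      have h5 := (avg_mem hmeas hbd φ).1; have h6 := (avg_mem hmeas hbd φ).2
      rw [abs_le]; constructor <;> linarith
    have h3 : |(W φ^2 - aW φ^2)/2| ≤ D φ := by
      have e : (W φ^2 - aW φ^2)/2 = (W φ - aW φ) * ((W φ + aW φ)/2) := by ring
      rw [e, abs_mul]
      have hb : |(W φ + aW φ)/2| ≤ 1 := by
        rw [abs_div, abs_two]; linarith
      calc |W φ - aW φ| * |(W φ + aW φ)/2| ≤ D φ * 1 :=
            mul_le_mul h1 hb (abs_nonneg _) ((abs_nonneg _).trans h1)
        _ = D φ := mul_one _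
    have h5 := (hT2bd φ).1
    calc |Bf φ| ≤ |(W φ^2 - aW φ^2)/2| + |T2 φ| := abs_sub _ _
      _ ≤ D φ + T2 φ := by rw [abs_of_nonneg h5]; linarith
  have hBfmeas : AEStronglyMeasurable Bf volume := by
    apply Measurable.aestronglyMeasurable
    exact (((hmeas.pow_const 2).sub ((haWc.measurable).pow_const 2)).div_const 2).sub
      hT2c.measurable
  have hBfint : Integrable Bf volume := by
    apply Integrable.mono' (hDint.add hT2int) hBfmeas
    refine Filter.Eventually.of_forall (fun φ => ?_)
    rw [Real.norm_eq_abs]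
    exact hBfabs φ
  have hBfsum : (-3:ℝ) ≤ ∫ φ, Bf φ := by
    have h1 : ∀ φ, -(D φ + T2 φ) ≤ Bf φ := fun φ => neg_le_of_abs_le (hBfabs φ)
    have h2 : (∫ φ, -(D φ + T2 φ)) ≤ ∫ φ, Bf φ :=
      integral_mono (hDint.add hT2int).neg hBfint h1
    rw [integral_neg, integral_add hDint hT2int] at h2
    linarith
  -- assembling
  have hAfint : Integrable (fun φ => gW φ - gS φ) volume := hgWint.sub hgSint
  have hact : action Φ W = (∫ φ, (gW φ - gS φ)) + ∫ φ, Bf φ := by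
    rw [← integral_add hAfint hBfint]
    unfold action
    congr 1
    funext φ
    have e1 : Wsh φ ^ 2 = 1 := Wsh_sq φ
    simp only [hBf, hgW, hgS, hT2, haW, haS]
    unfold gfun
    rw [e1]
    ring
  have hAfsum : α * (∫ ψ in Set.Iic (-2:ℝ), U ψ^2) + α * (∫ ψ in Set.Ici (2:ℝ), U ψ^2) - 4
      ≤ ∫ φ, (gW φ - gS φ) := by
    rw [integral_sub hgWint hgSint]
    linarith
  have hmid' : α * (∫ ψ in Set.Ioo (-2:ℝ) 2, U ψ^2) ≤ α * 16 :=
    mul_le_mul_of_nonneg_left hmid (le_of_lt hα0)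
  rw [hact]
  have hfinal : α * (∫ φ, U φ^2)
      = α * (∫ ψ in Set.Iic (-2:ℝ), U ψ^2) + α * (∫ ψ in Set.Ioo (-2:ℝ) 2, U ψ^2)
        + α * (∫ ψ in Set.Ici (2:ℝ), U ψ^2) := by
    rw [hdecomp]; ring
  have : (∫ φ, (Wsh φ - W φ)^2) = ∫ φ, U φ^2 := rfl
  rw [this]
  linarith

end bigbound

theorem sublevel_sets_bounded
    (Φ : ℝ → ℝ) (hΦ : ContDiff ℝ 2 Φ)
    (hN1 : deriv Φ (-1) = -1) (hN2 : deriv Φ 1 = 1)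
    (hC : ∀ w ∈ Set.Icc (-1 : ℝ) 1, 0 ≤ deriv (deriv Φ) w)
    (hE : Φ (-1) = Φ 1)
    (hS1 : deriv (deriv Φ) (-1) < 1) (hS2 : deriv (deriv Φ) 1 < 1)
    (hA : ∀ w ∈ Set.Ioo (-1 : ℝ) 1, 0 < Φ (-1) - Φ w + w ^ 2 / 2 - 1 / 2) :
    ∀ c₁ : ℝ, ∃ c₂ > (0 : ℝ), ∀ W : ℝ → ℝ, inC0 W → action Φ W ≤ c₁ →
      eLpNorm (fun φ => Wsh φ - W φ) 2 (volume : Measure ℝ) ≤ ENNReal.ofReal c₂ := by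
  intro c₁
  have hA' : ∀ w ∈ Set.Ioo (-1:ℝ) 1, 0 < gfun Φ w := hA
  obtain ⟨α, hα0, hαR, hαL⟩ := exists_alpha hΦ hN1 hN2 hE hS1 hS2 hA'
  set r : ℝ := max ((c₁ + (16*α + 7))/α) 0 with hr
  refine ⟨Real.sqrt r + 1, by positivity, ?_⟩
  intro W hW hact
  obtain ⟨⟨hmono, hL2, _, _⟩, hpin0, hpin1⟩ := hW
  have hlow := action_lower hΦ hN1 hN2 hC hE hA' hα0 hαR hαL hmono hpin0 hpin1 hL2
  have hint : (∫ φ, (Wsh φ - W φ)^2) ≤ r := by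
    have h1 : α * (∫ φ, (Wsh φ - W φ)^2) ≤ c₁ + (16*α + 7) := by linarith
    have h2 : (∫ φ, (Wsh φ - W φ)^2) ≤ (c₁ + (16*α + 7))/α := by
      rw [le_div_iff₀ hα0, mul_comm]; linarith
    exact le_trans h2 (le_max_left _ _)
  have hp1 : (2:ENNReal) ≠ 0 := by norm_num
  have hp2 : (2:ENNReal) ≠ ⊤ := by norm_num
  rw [hL2.eLpNorm_eq_integral_rpow_norm hp1 hp2]
  apply ENNReal.ofReal_le_ofReal
  have htr : (2:ENNReal).toReal = 2 := by norm_num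
  rw [htr]
  have heq : ∀ φ : ℝ, ‖Wsh φ - W φ‖ ^ (2:ℝ) = (Wsh φ - W φ)^2 := fun φ => by
    rw [Real.norm_eq_abs, show (2:ℝ) = ((2:ℕ):ℝ) from by norm_num, Real.rpow_natCast, sq_abs]
  simp only [heq]
  have hy0 : 0 ≤ ∫ φ, (Wsh φ - W φ)^2 := integral_nonneg (fun φ => sq_nonneg _)
  rw [show ((2:ℝ))⁻¹ = 1/(2:ℝ) by norm_num, ← Real.sqrt_eq_rpow]
  have h3 : Real.sqrt (∫ φ, (Wsh φ - W φ)^2) ≤ Real.sqrt r := Real.sqrt_le_sqrt hint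
  linarith
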